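/- arXiv:2402.05565 — 4 statements merged into one kernel-verified Lean document; each statement's English description precedes it below -/
import Mathlib

section
/- An extension of a divisible abelian group by a finite abelian group splits: if E is an abelian group fitting in a short exact sequence 0 → F → E → D → 0 with F finite and D divisible, then E ≅ D ⊕ F' for some quotient F' of F. -/
/-!
Let `n = |ker π|`. Since `D` is divisible, `n^k • E + ker π = E` for every `k`, and `E` is
`q`-divisible for every `q` prime to `n`. The finite groups `n^k • E ∩ ker π` stabilize, and then
`G = n^k • E` satisfies `n • G = G`, so `G` is divisible; hence `G` is a direct summand of `E`
with complement `E / G`, a quotient of `F`. Finally `π` maps `G` onto `D` with finite kernel, and a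
divisible group is isomorphic to its quotient by any finite subgroup: by induction one removes a
cyclic subgroup `⟨c⟩` of prime order `p` at a time, using the Prüfer subgroup `H` of successive
`p`-th roots of `c`, on which multiplication by `p` is onto with kernel `⟨c⟩`.
-/

open AddSubgroup Function
open scoped Pointwise

def IsDivisible (A : Type*) [AddMonoid A] : Prop :=
  ∀ n : ℕ, n ≠ 0 → Surjective fun a : A => n • a

namespace IsDivisible

theorem of_prime {A : Type*} [AddMonoid A] (h : ∀ p : ℕ, p.Prime → Surjective fun a : A => p • a) :
    IsDivisible A := by
  intro n
  induction n using Nat.recOnMul with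
  | zero => exact fun h0 => absurd rfl h0
  | one => exact fun _ a => ⟨a, one_nsmul a⟩
  | prime p hp => exact fun _ => h p hp
  | mul a b ha hb =>
    intro hab
    simp only [mul_smul]
    exact (ha (left_ne_zero_of_mul hab)).comp (hb (right_ne_zero_of_mul hab))

theorem of_surjective {A B : Type*} [AddMonoid A] [AddMonoid B] (hA : IsDivisible A) (f : A →+ B)
    (hf : Surjective f) : IsDivisible B := by
  intro n hn b
  obtain ⟨a, rfl⟩ := hf b
  obtain ⟨x, rfl⟩ := hA n hn a
  exact ⟨f x, (map_nsmul f n x).symm⟩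

theorem exists_seq_nsmul_succ_eq {A : Type*} [AddMonoid A] (hA : IsDivisible A) {n : ℕ}
    (hn : n ≠ 0) (c : A) : ∃ a : ℕ → A, a 0 = c ∧ ∀ k, n • a (k + 1) = a k := by
  choose root hroot using hA n hn
  exact ⟨fun k => root^[k] c, rfl, fun k => by
    show n • root^[k + 1] c = root^[k] c
    rw [iterate_succ_apply']
    exact hroot _⟩

theorem exists_retraction {G : Type*} [AddCommGroup G] {H : AddSubgroup G} (hH : IsDivisible H) :
    ∃ r : G →+ H, ∀ h : H, r h = h := by
  let := divisibleByOfSMulRightSurj H ℕ fun {n} => hH n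
  let := AddGroup.divisibleByIntOfDivisibleByNat H
  obtain ⟨r, hr⟩ := (Module.Baer.of_divisible H).extension_property_addMonoidHom H.subtype
    H.subtype_injective (AddMonoidHom.id H)
  exact ⟨r, DFunLike.congr_fun hr⟩

end IsDivisible

namespace AddSubgroup

variable {G : Type*} [AddCommGroup G]

theorem surjective_nsmul_iff {H : AddSubgroup G} {n : ℕ} :
    (Surjective fun a : H => n • a) ↔ H ≤ n • H := by
  constructor
  · intro h x hx
    obtain ⟨⟨y, hy⟩, hyx⟩ := h ⟨x, hx⟩
    exact (mem_smul_pointwise_iff_exists _ _ _).2 ⟨y, hy, congrArg Subtype.val hyx⟩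
  · rintro h ⟨x, hx⟩
    obtain ⟨y, hy, rfl⟩ := (mem_smul_pointwise_iff_exists _ _ _).1 (h hx)
    exact ⟨⟨y, hy⟩, rfl⟩

theorem nsmul_le_self (n : ℕ) (H : AddSubgroup G) : n • H ≤ H := by
  intro x hx
  obtain ⟨y, hy, rfl⟩ := (mem_smul_pointwise_iff_exists _ _ _).1 hx
  exact nsmul_mem hy n

theorem card_map_lt_card {G' : Type*} [AddGroup G'] {f : G →+ G'} {K : AddSubgroup G} [Finite K]
    {x : G} (hxK : x ∈ K) (hx : x ≠ 0) (hfx : f x = 0) : Nat.card (K.map f) < Nat.card K := by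
  by_contra! hle
  have hinj := ((f.addSubgroupMap_surjective K).bijective_of_nat_card_le hle).injective
  have : (⟨x, hxK⟩ : K) = 0 := hinj (Subtype.ext (by simpa using hfx))
  exact hx (congrArg Subtype.val this)

variable {H : AddSubgroup G} {r : G →+ H}

noncomputable def equivProdQuotientOfRetraction (hr : ∀ h : H, r h = h) : G ≃+ H × G ⧸ H :=
  AddEquiv.ofBijective (r.prod (QuotientAddGroup.mk' H)) <| by
    refine ⟨(injective_iff_map_eq_zero _).2 fun x hx => ?_, fun ⟨h, y⟩ => ?_⟩
    · obtain ⟨hrx, hxH⟩ := Prod.ext_iff.1 hx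
      have hxH : x ∈ H := (QuotientAddGroup.eq_zero_iff x).1 hxH
      simpa [hr ⟨x, hxH⟩] using congrArg Subtype.val hrx
    · induction y using QuotientAddGroup.induction_on with
      | H y =>
      refine ⟨h + (y - r y), Prod.ext ?_ ?_⟩
      · simp [hr]
      · show QuotientAddGroup.mk (h + (y - r y) : G) = QuotientAddGroup.mk y
        rw [QuotientAddGroup.eq_iff_sub_mem]
        convert H.sub_mem h.2 (r y).2 using 1
        abel

theorem nonempty_addEquiv_quotient_of_retraction (hr : ∀ h : H, r h = h) {ψ : H →+ H}
    (hψ : Surjective ψ) : Nonempty (G ≃+ G ⧸ ψ.ker.map H.subtype) := by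
  -- `φ` is `ψ` on `H` and the identity on `ker r`
  let φ : G →+ G := H.subtype.comp (ψ.comp r) + (AddMonoidHom.id G - H.subtype.comp r)
  have hφ : ∀ x, φ x = ψ (r x) + (x - r x) := fun _ => rfl
  have hφsurj : Surjective φ := by
    intro y
    obtain ⟨h, hh⟩ := hψ (r y)
    refine ⟨h + (y - r y), ?_⟩
    simp [hφ, hr, hh]
  have hφker : φ.ker = ψ.ker.map H.subtype := by
    ext x
    constructor
    · intro hx
      have hψx : ψ (r x) = 0 := by simpa [hφ, hr] using congrArg r hx
      refine ⟨r x, hψx, ?_⟩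
      have hxr : x = r x := by simpa [hφ, hψx, sub_eq_zero] using hx
      exact hxr.symm
    · rintro ⟨h, hh, rfl⟩
      simp_all
  exact ⟨(QuotientAddGroup.quotientAddEquivOfEq hφker.symm).trans
    (QuotientAddGroup.quotientKerEquivOfSurjective φ hφsurj) |>.symm⟩

end AddSubgroup

section PrueferSubgroup

variable {G : Type*} [AddCommGroup G] {p : ℕ} {a : ℕ → G}

theorem pow_nsmul_eq_of_nsmul_succ_eq (ha : ∀ k, p • a (k + 1) = a k) (k : ℕ) :
    p ^ k • a k = a 0 := by
  induction k with
  | zero => simp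
  | succ k ih => rw [pow_succ, mul_smul, ha, ih]

theorem monotone_zmultiples_of_nsmul_succ_eq (ha : ∀ k, p • a (k + 1) = a k) :
    Monotone fun k => zmultiples (a k) :=
  monotone_nat_of_le_succ fun k => zmultiples_le.2 (ha k ▸ nsmul_mem (mem_zmultiples _) p)

theorem mem_iSup_zmultiples_iff (ha : ∀ k, p • a (k + 1) = a k) {x : G} :
    x ∈ ⨆ k, zmultiples (a k) ↔ ∃ k, x ∈ zmultiples (a k) :=
  mem_iSup_of_directed (monotone_zmultiples_of_nsmul_succ_eq ha).directed_le

theorem isDivisible_iSup_zmultiples (ha : ∀ k, p • a (k + 1) = a k) (hp : p.Prime)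
    (h0 : p • a 0 = 0) : IsDivisible (⨆ k, zmultiples (a k) : AddSubgroup G) := by
  refine IsDivisible.of_prime fun q hq => surjective_nsmul_iff.2 fun x hx => ?_
  obtain ⟨k, hk⟩ := (mem_iSup_zmultiples_iff ha).1 hx
  refine zmultiples_le.2 ?_ hk
  have hmem : ∀ j, a j ∈ ⨆ k, zmultiples (a k) := fun j =>
    (mem_iSup_zmultiples_iff ha).2 ⟨j, mem_zmultiples _⟩
  rcases eq_or_ne q p with rfl | hqp
  · exact ha k ▸ smul_mem_pointwise_smul _ _ _ (hmem (k + 1))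
  · have hord : addOrderOf (a k) ∣ p ^ (k + 1) := by
      refine addOrderOf_dvd_of_nsmul_eq_zero ?_
      rw [pow_succ', mul_smul, pow_nsmul_eq_of_nsmul_succ_eq ha, h0]
    have hcop : q.Coprime (addOrderOf (a k)) :=
      (((Nat.coprime_primes hq hp).2 hqp).pow_right _).coprime_dvd_right hord
    obtain ⟨m, hm⟩ := exists_nsmul_eq_self_of_coprime hcop
    rw [← hm, smul_comm]
    exact smul_mem_pointwise_smul _ _ _ (nsmul_mem (hmem k) m)

theorem addOrderOf_eq_pow_of_nsmul_succ_eq (ha : ∀ k, p • a (k + 1) = a k)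
    (hc : addOrderOf (a 0) = p) (hp : p.Prime) (k : ℕ) : addOrderOf (a k) = p ^ (k + 1) := by
  have : Fact p.Prime := ⟨hp⟩
  refine addOrderOf_eq_prime_pow ?_ ?_
  · rw [pow_nsmul_eq_of_nsmul_succ_eq ha]
    intro h0
    rw [h0, addOrderOf_zero] at hc
    exact hp.one_lt.ne hc
  · rw [pow_succ', mul_smul, pow_nsmul_eq_of_nsmul_succ_eq ha, ← hc, addOrderOf_nsmul_eq_zero]

theorem mem_zmultiples_of_mem_iSup_zmultiples (ha : ∀ k, p • a (k + 1) = a k)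
    (hc : addOrderOf (a 0) = p) (hp : p.Prime) {x : G} (hx : x ∈ ⨆ k, zmultiples (a k))
    (hpx : p • x = 0) : x ∈ zmultiples (a 0) := by
  obtain ⟨k, hk⟩ := (mem_iSup_zmultiples_iff ha).1 hx
  obtain ⟨m, rfl⟩ := mem_zmultiples_iff.1 hk
  have hdvd : ((p : ℤ) * (p : ℤ) ^ k) ∣ p * m := by
    have := addOrderOf_dvd_iff_zsmul_eq_zero.2 (show ((p : ℤ) * m) • a k = 0 by
      rw [mul_smul, natCast_zsmul]; exact hpx)
    simpa [addOrderOf_eq_pow_of_nsmul_succ_eq ha hc hp k, pow_succ'] using this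
  obtain ⟨t, rfl⟩ := (mul_dvd_mul_iff_left (by exact_mod_cast hp.ne_zero)).1 hdvd
  rw [mul_comm, mul_smul, ← Nat.cast_pow, natCast_zsmul, pow_nsmul_eq_of_nsmul_succ_eq ha]
  exact zsmul_mem (mem_zmultiples _) t

end PrueferSubgroup

namespace IsDivisible

variable {G : Type*} [AddCommGroup G]

theorem nonempty_addEquiv_quotient_zmultiples (hG : IsDivisible G) {p : ℕ} (hp : p.Prime) {c : G}
    (hc : addOrderOf c = p) : Nonempty (G ≃+ G ⧸ zmultiples c) := by
  obtain ⟨a, rfl, ha⟩ := hG.exists_seq_nsmul_succ_eq hp.ne_zero c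
  set H : AddSubgroup G := ⨆ k, zmultiples (a k)
  have hH : IsDivisible H :=
    isDivisible_iSup_zmultiples ha hp (hc ▸ addOrderOf_nsmul_eq_zero (a 0))
  obtain ⟨r, hr⟩ := hH.exists_retraction
  have hker : (DistribSMul.toAddMonoidHom H p).ker.map H.subtype = zmultiples (a 0) := by
    ext x
    constructor
    · rintro ⟨h, hh, rfl⟩
      exact mem_zmultiples_of_mem_iSup_zmultiples ha hc hp h.2 (congrArg Subtype.val hh)
    · intro hx
      have hxH : x ∈ H := (mem_iSup_zmultiples_iff ha).2 ⟨0, hx⟩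
      refine ⟨⟨x, hxH⟩, Subtype.ext ?_, rfl⟩
      obtain ⟨m, rfl⟩ := mem_zmultiples_iff.1 hx
      simp [← hc]
  exact hker ▸ nonempty_addEquiv_quotient_of_retraction hr (hH p hp.ne_zero)

theorem nonempty_addEquiv_quotient_of_finite (hG : IsDivisible G) (K : AddSubgroup G) [Finite K] :
    Nonempty (G ≃+ G ⧸ K) := by
  induction hN : Nat.card K using Nat.strong_induction_on generalizing G with
  | _ N ih =>
  rcases eq_or_ne K ⊥ with rfl | hK
  · exact ⟨QuotientAddGroup.quotientBot.symm⟩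
  have hp : Fact (Nat.card K).minFac.Prime := ⟨Nat.minFac_prime (card_eq_one.not.2 hK)⟩
  obtain ⟨c, hc⟩ := exists_prime_addOrderOf_dvd_card' _ (Nat.minFac_dvd (Nat.card K))
  rw [← addOrderOf_coe] at hc
  set C := zmultiples (c : G)
  have hCK : C ≤ K := zmultiples_le.2 c.2
  obtain ⟨e₁⟩ := hG.nonempty_addEquiv_quotient_zmultiples hp.out hc
  have hlt : Nat.card (K.map (QuotientAddGroup.mk' C)) < N := hN ▸ card_map_lt_card c.2
    (fun h => hp.out.one_lt.ne' (by rw [← hc, h, addOrderOf_zero]))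
    ((QuotientAddGroup.eq_zero_iff _).2 (mem_zmultiples _))
  have : Finite (K.map (QuotientAddGroup.mk' C)) :=
    .of_surjective _ ((QuotientAddGroup.mk' C).addSubgroupMap_surjective K)
  obtain ⟨e₂⟩ := ih _ hlt (hG.of_surjective _ (QuotientAddGroup.mk'_surjective C)) _ rfl
  exact ⟨e₁.trans (e₂.trans (QuotientAddGroup.quotientQuotientEquivQuotient C K hCK))⟩

theorem nonempty_addEquiv_of_surjective {D : Type*} [AddCommGroup D] (hG : IsDivisible G)
    {f : G →+ D} (hf : Surjective f) [Finite f.ker] : Nonempty (G ≃+ D) :=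
  let ⟨e⟩ := hG.nonempty_addEquiv_quotient_of_finite f.ker
  ⟨e.trans (QuotientAddGroup.quotientKerEquivOfSurjective f hf)⟩

end IsDivisible

section FiniteKernel

variable {E D : Type*} [AddCommGroup E] [AddCommGroup D] {π : E →+ D}

theorem nsmul_top_sup_ker_eq_top (hπ : Surjective π) (hD : IsDivisible D) {m : ℕ} (hm : m ≠ 0) :
    m • (⊤ : AddSubgroup E) ⊔ π.ker = ⊤ := by
  refine eq_top_iff.2 fun e _ => ?_
  obtain ⟨d, hd⟩ := hD m hm (π e)
  obtain ⟨w, rfl⟩ := hπ d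
  refine mem_sup.2 ⟨m • w, smul_mem_pointwise_smul _ _ _ trivial, e - m • w, ?_, by abel⟩
  simp [AddMonoidHom.mem_ker, ← hd]

theorem nsmul_top_eq_top_of_coprime (hπ : Surjective π) (hD : IsDivisible D) [Finite π.ker]
    {q : ℕ} (hq0 : q ≠ 0) (hq : (Nat.card π.ker).Coprime q) : q • (⊤ : AddSubgroup E) = ⊤ := by
  refine eq_top_iff.2 fun e _ => ?_
  obtain ⟨d, hd⟩ := hD q hq0 (π e)
  obtain ⟨w, rfl⟩ := hπ d
  obtain ⟨k, hk⟩ := (nsmulCoprime hq).surjective ⟨e - q • w, by simp [AddMonoidHom.mem_ker, ← hd]⟩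
  refine (mem_smul_pointwise_iff_exists _ _ _).2 ⟨w + k, trivial, ?_⟩
  have hk : q • (k : E) = e - q • w := congrArg Subtype.val hk
  rw [smul_add, hk]
  abel

theorem exists_nsmul_pow_nsmul_top_eq (hπ : Surjective π) (hD : IsDivisible D) [Finite π.ker] :
    ∃ k, Nat.card π.ker • Nat.card π.ker ^ k • (⊤ : AddSubgroup E) =
      Nat.card π.ker ^ k • (⊤ : AddSubgroup E) := by
  set n := Nat.card π.ker
  -- the traces `n ^ k • E ⊓ ker π` stabilize in the finite group `ker π`; by modularity, and as
  -- `n ^ k • E ⊔ ker π = E`, so do the subgroups `n ^ k • E` themselves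
  have hanti : Antitone fun k => n ^ k • (⊤ : AddSubgroup E) := by
    refine antitone_nat_of_succ_le fun k => ?_
    rw [pow_succ, mul_smul]
    exact AddSubgroup.map_mono le_top
  obtain ⟨k, hk⟩ := WellFoundedLT.antitone_chain_condition
    (f := fun k => (n ^ k • (⊤ : AddSubgroup E)).addSubgroupOf π.ker)
    fun i j hij => addSubgroupOf_mono _ (hanti hij)
  refine ⟨k, ?_⟩
  rw [← mul_smul, ← pow_succ']
  refine eq_of_le_of_inf_le_of_sup_le (z := π.ker) (hanti k.le_succ)
    (addSubgroupOf_inj.1 (hk (k + 1) k.le_succ)).le ?_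
  exact le_top.trans (nsmul_top_sup_ker_eq_top hπ hD (pow_ne_zero _ Nat.card_pos.ne')).ge

theorem exists_isDivisible_sup_ker_eq_top (hπ : Surjective π) (hD : IsDivisible D)
    [Finite π.ker] : ∃ G : AddSubgroup E, IsDivisible G ∧ G ⊔ π.ker = ⊤ := by
  set n := Nat.card π.ker
  obtain ⟨k, hk⟩ := exists_nsmul_pow_nsmul_top_eq hπ hD
  refine ⟨n ^ k • ⊤, IsDivisible.of_prime fun q hq => surjective_nsmul_iff.2 ?_,
    nsmul_top_sup_ker_eq_top hπ hD (pow_ne_zero _ Nat.card_pos.ne')⟩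
  by_cases hqn : q ∣ n
  · obtain ⟨t, ht⟩ := hqn
    calc n ^ k • ⊤ = n • n ^ k • (⊤ : AddSubgroup E) := hk.symm
      _ = q • t • n ^ k • (⊤ : AddSubgroup E) := by rw [ht, mul_smul]
      _ ≤ q • n ^ k • ⊤ := AddSubgroup.map_mono (nsmul_le_self _ _)
  · have hq : q • (⊤ : AddSubgroup E) = ⊤ :=
      nsmul_top_eq_top_of_coprime hπ hD hq.ne_zero ((hq.coprime_iff_not_dvd.2 hqn).symm)
    refine le_of_eq ?_
    calc n ^ k • ⊤ = n ^ k • q • (⊤ : AddSubgroup E) := by rw [hq]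
      _ = q • n ^ k • ⊤ := by rw [smul_smul, mul_comm, mul_smul]

end FiniteKernel

theorem AddMonoidHom.surjective_comp_of_range_sup_ker_eq_top {F E Q : Type*} [AddGroup F]
    [AddCommGroup E] [AddGroup Q] {f : E →+ Q} (hf : Surjective f) {g : F →+ E}
    (h : g.range ⊔ f.ker = ⊤) : Surjective (f.comp g) := by
  intro y
  obtain ⟨x, rfl⟩ := hf y
  obtain ⟨_, ⟨z, rfl⟩, k, hk, rfl⟩ := mem_sup.1 (h ▸ mem_top x)
  exact ⟨z, by simp [(AddMonoidHom.mem_ker).1 hk]⟩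

theorem divisible_extension_splits_general
    (F E D : Type*) [AddCommGroup F] [AddCommGroup E] [AddCommGroup D]
    [Finite F]
    (hdiv : ∀ (d : D) (n : ℕ), 0 < n → ∃ x : D, n • x = d)
    (ι : F →+ E) (π : E →+ D)
    (hπ : Function.Surjective π)
    (hexact : ι.range = π.ker) :
    ∃ (F' : Type) (_ : AddCommGroup F') (q : F →+ F'),
      Function.Surjective q ∧ Nonempty (E ≃+ D × F') := by
  have hD : IsDivisible D := fun n hn d => hdiv d n (Nat.pos_of_ne_zero hn)
  have : Finite π.ker := hexact ▸ .of_surjective _ ι.rangeRestrict_surjective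
  obtain ⟨G, hG, hGker⟩ := exists_isDivisible_sup_ker_eq_top hπ hD
  obtain ⟨r, hr⟩ := hG.exists_retraction
  have hπG : Surjective (π.comp G.subtype) :=
    π.surjective_comp_of_range_sup_ker_eq_top hπ (by rwa [range_subtype])
  have : Finite (π.comp G.subtype).ker :=
    .of_injective (fun x => (⟨x.1, x.2⟩ : π.ker)) fun x y h => by simpa using congrArg Subtype.val h
  obtain ⟨eG⟩ := hG.nonempty_addEquiv_of_surjective hπG
  set q := (QuotientAddGroup.mk' G).comp ι
  have hq : Surjective q :=
    (QuotientAddGroup.mk' G).surjective_comp_of_range_sup_ker_eq_top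
      (QuotientAddGroup.mk'_surjective G) (by rwa [QuotientAddGroup.ker_mk', hexact, sup_comm])
  have : Finite (E ⧸ G) := .of_surjective _ hq
  let eQ : E ⧸ G ≃+ Shrink.{0} (E ⧸ G) := Shrink.addEquiv.symm
  exact ⟨_, inferInstance, eQ.toAddMonoidHom.comp q, eQ.surjective.comp hq,
    ⟨(equivProdQuotientOfRetraction hr).trans (eG.prodCongr eQ)⟩⟩

theorem divisible_extension_splits
    (F E D : Type*) [AddCommGroup F] [AddCommGroup E] [AddCommGroup D]
    [Finite F]
    (hdiv : ∀ (d : D) (n : ℕ), 0 < n → ∃ x : D, n • x = d)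
    (ι : F →+ E) (π : E →+ D)
    (hι : Function.Injective ι) (hπ : Function.Surjective π)
    (hexact : ι.range = π.ker) :
    ∃ (F' : Type) (_ : AddCommGroup F') (q : F →+ F'),
      Function.Surjective q ∧ Nonempty (E ≃+ D × F') :=
  divisible_extension_splits_general F E D hdiv ι π hπ hexact
end

section
/- Every subgroup of an abelian group of finite ℚ_p/ℤ_p-type is again of finite ℚ_p/ℤ_p-type, i.e. every subgroup of (ℚ_p/ℤ_p)^r ⊕ F, with r a natural number and F a finite abelian group, is isomorphic to (ℚ_p/ℤ_p)^s ⊕ F' for some natural number s and finite abelian group F'. -/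
/-!
STATEMENT 1: Every subgroup of an abelian group of finite `ℚ_p/ℤ_p`-type is again of
finite `ℚ_p/ℤ_p`-type: every subgroup of `(ℚ_p/ℤ_p)^r ⊕ F` (`F` finite) is isomorphic to
`(ℚ_p/ℤ_p)^s ⊕ F'` with `s ∈ ℕ` and `F'` finite.
-/

/-- The Prüfer `p`-group `ℚ_p/ℤ_p`, realized as the quotient of `ℚ_[p]` by `ℤ_[p]`. -/
def PruferGroup (p : ℕ) [Fact p.Prime] : Type :=
  ℚ_[p] ⧸ (AddMonoidHom.range (PadicInt.Coe.ringHom (p := p)).toAddMonoidHom)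

noncomputable instance (p : ℕ) [Fact p.Prime] : AddCommGroup (PruferGroup p) :=
  QuotientAddGroup.Quotient.addCommGroup _


namespace PruferAux
variable (p : ℕ) [Fact p.Prime]

noncomputable abbrev HH : AddSubgroup ℚ_[p] :=
  AddMonoidHom.range (PadicInt.Coe.ringHom (p := p)).toAddMonoidHom

noncomputable def mkP : ℚ_[p] →+ PruferGroup p := QuotientAddGroup.mk' (HH p)

variable {p}

theorem mem_HH_iff {x : ℚ_[p]} : x ∈ HH p ↔ ‖x‖ ≤ 1 := by
  constructor
  · rintro ⟨z, rfl⟩; exact z.2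
  · intro h; exact ⟨⟨x, h⟩, rfl⟩

theorem mkP_surjective : Function.Surjective (mkP p) :=
  QuotientAddGroup.mk'_surjective _

theorem mkP_eq_zero {x : ℚ_[p]} : mkP p x = 0 ↔ ‖x‖ ≤ 1 :=
  (QuotientAddGroup.eq_zero_iff x).trans mem_HH_iff

theorem prime_one_lt : 1 < p := (Fact.out : p.Prime).one_lt

/-- every element of the Prüfer group is `p`-power torsion -/
theorem ppow_torsion (x : PruferGroup p) : ∃ n : ℕ, p ^ n • x = 0 := by
  obtain ⟨q, rfl⟩ := mkP_surjective x
  obtain ⟨n, hn⟩ := pow_unbounded_of_one_lt ‖q‖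
    (by exact_mod_cast prime_one_lt (p := p) : (1:ℝ) < (p:ℝ))
  refine ⟨n, ?_⟩
  rw [← map_nsmul, mkP_eq_zero, nsmul_eq_mul]
  push_cast
  rw [norm_mul, norm_pow, Padic.norm_p]
  calc (p:ℝ)⁻¹ ^ n * ‖q‖ ≤ (p:ℝ)⁻¹ ^ n * (p:ℝ) ^ n := by
        apply mul_le_mul_of_nonneg_left hn.le (by positivity)
    _ = 1 := by
        rw [inv_pow]
        have hp : (0:ℝ) < (p:ℝ) := by exact_mod_cast (Fact.out : p.Prime).pos
        exact inv_mul_cancel₀ (pow_pos hp n).ne'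

/-- the Prüfer group is divisible -/
theorem divisible (x : PruferGroup p) {n : ℤ} (hn : n ≠ 0) : ∃ y, n • y = x := by
  obtain ⟨q, rfl⟩ := mkP_surjective x
  refine ⟨mkP p (q / n), ?_⟩
  rw [← map_zsmul, zsmul_eq_mul]
  congr 1
  rw [mul_div_assoc']
  exact mul_div_cancel_left₀ q (by exact_mod_cast hn)

end PruferAux

namespace PruferAux
variable {p : ℕ} [Fact p.Prime]

theorem ppow_ne_zero (v : ℕ) : ((p:ℚ_[p]))^v ≠ 0 := by
  have : ((p:ℚ_[p])) ≠ 0 := by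
    exact_mod_cast (Nat.cast_ne_zero (R := ℚ_[p])).mpr (Fact.out : p.Prime).pos.ne'
  exact pow_ne_zero _ this

theorem exists_rep_of_torsion {v : ℕ} {x : PruferGroup p} (h : p ^ v • x = 0) :
    ∃ a : ℕ, a < p ^ v ∧ mkP p ((a : ℚ_[p]) / (p:ℚ_[p]) ^ v) = x := by
  obtain ⟨q, rfl⟩ := mkP_surjective x
  rw [← map_nsmul, mkP_eq_zero, nsmul_eq_mul] at h
  push_cast at h
  set z : ℤ_[p] := ⟨(p:ℚ_[p]) ^ v * q, h⟩ with hz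
  obtain ⟨c, hc⟩ := Ideal.mem_span_singleton.mp (PadicInt.appr_spec v z)
  refine ⟨z.appr v, PadicInt.appr_lt z v, ?_⟩
  rw [eq_comm, ← sub_eq_zero, ← map_sub, mkP_eq_zero]
  have hc' : (z : ℚ_[p]) - (z.appr v : ℚ_[p]) = (p:ℚ_[p])^v * (c : ℚ_[p]) := by
    exact_mod_cast congrArg (PadicInt.Coe.ringHom (p := p)) hc
  have : q - (z.appr v : ℚ_[p]) / (p:ℚ_[p])^v = (c : ℚ_[p]) := by
    have hq : q = (z : ℚ_[p]) / (p:ℚ_[p])^v := by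
      rw [hz]
      exact (mul_div_cancel_left₀ q (ppow_ne_zero v)).symm
    rw [hq, div_sub_div_same, hc', mul_div_cancel_left₀ _ (ppow_ne_zero v)]
  rw [this]
  exact c.2

theorem norm_natCast_le_one (a : ℕ) : ‖(a : ℚ_[p])‖ ≤ 1 := by
  have := Padic.norm_int_le_one (p := p) (a : ℤ)
  push_cast at this
  exact this

theorem torsion_of_rep (a : ℕ) (v : ℕ) :
    p ^ v • mkP p ((a : ℚ_[p]) / (p:ℚ_[p]) ^ v) = 0 := by
  rw [← map_nsmul, mkP_eq_zero, nsmul_eq_mul]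
  push_cast
  rw [mul_comm, div_mul_cancel₀ _ (ppow_ne_zero v)]
  exact norm_natCast_le_one a

theorem finite_torsion (v : ℕ) : Finite {x : PruferGroup p // p ^ v • x = 0} := by
  apply Finite.of_surjective
    (fun a : Fin (p ^ v) =>
      (⟨mkP p ((a : ℚ_[p]) / (p:ℚ_[p]) ^ v), torsion_of_rep a v⟩ :
        {x : PruferGroup p // p ^ v • x = 0}))
  rintro ⟨x, hx⟩
  obtain ⟨a, ha, rfl⟩ := exists_rep_of_torsion hx
  exact ⟨⟨a, ha⟩, rfl⟩

variable (p)

/-- generator of the socle -/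
noncomputable def xi : PruferGroup p := mkP p (1 / (p:ℚ_[p]))

theorem pcast_ne_zero : ((p:ℚ_[p])) ≠ 0 := by simpa using ppow_ne_zero (p := p) 1

theorem p_zsmul_xi : ((zmultiplesHom (PruferGroup p) (xi p)) : ℤ →+ _) p = 0 := by
  show (p:ℤ) • xi p = 0
  rw [xi, ← map_zsmul, mkP_eq_zero, zsmul_eq_mul]
  push_cast
  rw [mul_one_div, div_self (pcast_ne_zero p)]
  simp

noncomputable def fromZMod : ZMod p →+ PruferGroup p :=
  ZMod.lift p ⟨zmultiplesHom (PruferGroup p) (xi p), p_zsmul_xi p⟩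

variable {p}

theorem fromZMod_natCast (a : ℕ) :
    fromZMod p (a : ZMod p) = mkP p ((a : ℚ_[p]) / (p:ℚ_[p])) := by
  have : ((a : ℤ) : ZMod p) = (a : ZMod p) := by push_cast; ring
  rw [← this, fromZMod, ZMod.lift_coe]
  show (a : ℤ) • xi p = _
  rw [xi, ← map_zsmul, zsmul_eq_mul]
  push_cast
  rw [mul_one_div]

theorem fromZMod_torsion (a : ZMod p) : p • fromZMod p a = 0 := by
  have h : (p : ℕ) • a = 0 := by
    rw [nsmul_eq_mul, ZMod.natCast_self, zero_mul]
  rw [← map_nsmul, h, map_zero]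

theorem fromZMod_injective : Function.Injective (fromZMod p) := by
  rw [injective_iff_map_eq_zero]
  intro a ha
  have hi : NeZero p := ⟨(Fact.out : p.Prime).pos.ne'⟩
  have hval : ((ZMod.val a : ℕ) : ZMod p) = a := ZMod.natCast_zmod_val a
  rw [← hval, fromZMod_natCast, mkP_eq_zero] at ha
  rw [norm_div, Padic.norm_p] at ha
  have hp1 : (1:ℝ) < p := by exact_mod_cast (Fact.out : p.Prime).one_lt
  have hlt : ‖((a.val : ℤ) : ℚ_[p])‖ < 1 := by
    push_cast
    rw [div_le_iff₀ (by positivity : (0:ℝ) < (p:ℝ)⁻¹)] at ha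
    · calc ‖((a.val : ℕ) : ℚ_[p])‖ ≤ (p:ℝ)⁻¹ := by simpa using ha
        _ < 1 := by
          rw [inv_lt_one_iff₀]; right; exact hp1
  have hdvd : ((p:ℤ)) ∣ (a.val : ℤ) := (Padic.norm_intCast_lt_one_iff).mp hlt
  have hdvd' : (p:ℕ) ∣ a.val := Int.ofNat_dvd.mp (by exact_mod_cast hdvd)
  have h0 : a.val = 0 := Nat.eq_zero_of_dvd_of_lt hdvd' (ZMod.val_lt a)
  rw [← hval, h0, Nat.cast_zero]

theorem exists_fromZMod {x : PruferGroup p} (h : p • x = 0) :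
    ∃ a : ZMod p, fromZMod p a = x := by
  have h1 : p ^ 1 • x = 0 := by rwa [pow_one]
  obtain ⟨a, _, rfl⟩ := exists_rep_of_torsion h1
  refine ⟨(a : ZMod p), ?_⟩
  rw [fromZMod_natCast, pow_one]

end PruferAux

section Generic
variable {M : Type*} [AddCommGroup M]

/-- Baer's criterion hypothesis from (ℕ-)divisibility. -/
theorem baer_of_divisible
    (hdiv : ∀ n : ℕ, 0 < n → ∀ x : M, ∃ y : M, n • y = x) : Module.Baer ℤ M := by
  intro I g
  obtain ⟨a, ha⟩ := (IsPrincipalIdealRing.principal I).principal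
  by_cases h0 : a = 0
  · refine ⟨0, fun x hx => ?_⟩
    have hx0 : x = 0 := by
      rw [ha, h0, Submodule.span_zero_singleton] at hx
      simpa using hx
    subst hx0
    rw [show (⟨0, hx⟩ : I) = 0 from rfl]
    exact (map_zero g).symm
  · have hamem : a ∈ I := by rw [ha]; exact Submodule.subset_span rfl
    obtain ⟨y, hy⟩ := hdiv a.natAbs (Int.natAbs_pos.mpr h0) (g ⟨a, hamem⟩)
    set y' : M := a.sign • y with hy'
    have hay : a • y' = g ⟨a, hamem⟩ := by
      rw [hy', smul_smul, Int.mul_sign_self, ← hy, natCast_zsmul]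
    refine ⟨LinearMap.toSpanSingleton ℤ M y', fun x hx => ?_⟩
    have hx' := hx
    rw [ha, Submodule.mem_span_singleton] at hx'
    obtain ⟨c, hc⟩ := hx'
    have hxc : (⟨x, hx⟩ : I) = c • (⟨a, hamem⟩ : I) := by
      apply Subtype.ext
      simp [← hc]
    rw [hxc, map_smul, ← hay, LinearMap.toSpanSingleton_apply, ← hc, smul_eq_mul, mul_smul]

/-- A retraction onto a divisible subgroup. -/
theorem exists_retraction (B : AddSubgroup M)
    (hdiv : ∀ n : ℕ, 0 < n → ∀ x : ↥B, ∃ y : ↥B, n • y = x) :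
    ∃ ρ : M →+ ↥B, ∀ b : ↥B, ρ ↑b = b := by
  obtain ⟨ρ, hρ⟩ := (baer_of_divisible hdiv).extension_property_addMonoidHom
    B.subtype Subtype.coe_injective (AddMonoidHom.id ↥B)
  exact ⟨ρ, fun b => by
    have := DFunLike.congr_fun hρ b
    simpa using this⟩

/-- Splitting off a retract: `M ≃+ B × M/B`. -/
noncomputable def splitEquiv (B : AddSubgroup M) (ρ : M →+ ↥B)
    (hρ : ∀ b : ↥B, ρ ↑b = b) : M ≃+ ↥B × (M ⧸ B) := by
  refine AddEquiv.ofBijective (ρ.prod (QuotientAddGroup.mk' B)) ⟨?_, ?_⟩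
  · intro x y hxy
    have h1 : ρ x = ρ y := congrArg Prod.fst hxy
    have h2 : (QuotientAddGroup.mk' B) x = (QuotientAddGroup.mk' B) y := congrArg Prod.snd hxy
    rw [QuotientAddGroup.mk'_eq_mk'] at h2
    obtain ⟨z, hz, hzy⟩ := h2
    subst hzy
    rw [map_add, show ρ z = ⟨z, hz⟩ from hρ ⟨z, hz⟩, left_eq_add] at h1
    have : z = 0 := congrArg Subtype.val h1
    rw [this, add_zero]
  · rintro ⟨d, q⟩
    obtain ⟨x, rfl⟩ := QuotientAddGroup.mk'_surjective B q
    refine ⟨(d : M) + x - (ρ x : M), ?_⟩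
    have h1 : ρ ((d : M) + x - (ρ x : M)) = d := by
      rw [map_sub, map_add, hρ d, hρ (ρ x)]
      abel
    have h2 : (QuotientAddGroup.mk' B) ((d : M) + x - (ρ x : M)) =
        (QuotientAddGroup.mk' B) x := by
      rw [QuotientAddGroup.mk'_eq_mk']
      exact ⟨(ρ x : M) - d, B.sub_mem (ρ x).2 d.2, by abel⟩
    simp only [AddMonoidHom.prod_apply, h1, h2]

/-- divisiblity by p plus p-power torsion gives full divisibility (inside a subgroup). -/
theorem nsmul_div_all (p : ℕ) (hp : p.Prime) (D : AddSubgroup M)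
    (htors : ∀ x ∈ D, ∃ t : ℕ, p ^ t • x = 0)
    (hpdiv : ∀ x ∈ D, ∃ y ∈ D, p • y = x) :
    ∀ m : ℕ, 0 < m → ∀ x ∈ D, ∃ y ∈ D, m • y = x := by
  intro m
  induction m using Nat.strong_induction_on with
  | _ m ih =>
    intro hm x hx
    rcases eq_or_ne m 1 with rfl | hm1
    · exact ⟨x, hx, one_smul _ _⟩
    · obtain ⟨q, hq, m', rfl⟩ : ∃ q, q.Prime ∧ ∃ m', m = q * m' := by
        obtain ⟨q, hq, hdvd⟩ := Nat.exists_prime_and_dvd hm1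
        exact ⟨q, hq, hdvd⟩
      have hm' : 0 < m' := Nat.pos_of_ne_zero (by rintro rfl; simp at hm)
      obtain ⟨y, hy, hym⟩ := ih m' (by
        have := hq.two_le
        calc m' < 2 * m' := by omega
          _ ≤ q * m' := by exact Nat.mul_le_mul_right _ (by omega)) hm' x hx
      -- now divide y by q
      rcases eq_or_ne q p with rfl | hqp
      · obtain ⟨z, hz, hzy⟩ := hpdiv y hy
        exact ⟨z, hz, by rw [mul_comm, mul_smul, hzy, hym]⟩
      · obtain ⟨t, ht⟩ := htors y hy
        have hcop : IsCoprime (q : ℤ) ((p : ℤ) ^ t) := by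
          rw [Int.isCoprime_iff_gcd_eq_one]
          have hnat : Nat.Coprime q (p ^ t) :=
            Nat.Coprime.pow_right t ((Nat.coprime_primes hq hp).mpr hqp)
          have : Int.gcd (q : ℤ) ((p : ℤ) ^ t) = Nat.gcd q (p ^ t) := by
            rw [show ((p:ℤ))^t = ((p ^ t : ℕ) : ℤ) by push_cast; ring]
            exact Int.gcd_natCast_natCast q (p ^ t)
          rw [this]
          exact hnat
        obtain ⟨u, v, huv⟩ := hcop
        have hpt : ((p : ℤ) ^ t) • y = 0 := by
          rw [show ((p:ℤ))^t = ((p ^ t : ℕ) : ℤ) by push_cast; ring, natCast_zsmul, ht]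
        have hqy : (q : ℕ) • (u • y) = y := by
          calc (q : ℕ) • (u • y) = ((q : ℤ)) • (u • y) := (natCast_zsmul _ _).symm
            _ = ((q : ℤ) * u) • y := (mul_smul _ _ _).symm
            _ = (u * (q:ℤ)) • y := by rw [mul_comm]
            _ = ((1 : ℤ) - v * (p:ℤ)^t) • y := by rw [← huv]; ring_nf
            _ = y - (v * (p:ℤ)^t) • y := by rw [sub_smul, one_smul]
            _ = y := by rw [mul_smul, hpt, smul_zero, sub_zero]
        refine ⟨u • y, D.zsmul_mem hy u, ?_⟩
        rw [mul_comm, mul_smul, hqy, hym]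
end Generic

section Structure
variable {p : ℕ} [Fact p.Prime]
open PruferAux

theorem pi_ppow_torsion {s : ℕ} (f : Fin s → PruferGroup p) : ∃ t : ℕ, p ^ t • f = 0 := by
  choose n hn using fun i => ppow_torsion (f i)
  refine ⟨Finset.univ.sup n, funext fun i => ?_⟩
  have hle : n i ≤ Finset.univ.sup n := Finset.le_sup (Finset.mem_univ i)
  calc (p ^ Finset.univ.sup n • f) i = p ^ Finset.univ.sup n • f i := rfl
    _ = p ^ (Finset.univ.sup n - n i) • (p ^ (n i) • f i) := by
        rw [smul_smul, ← pow_add, Nat.sub_add_cancel hle]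
    _ = 0 := by rw [hn i, smul_zero]

theorem pi_pdiv {s : ℕ} (f : Fin s → PruferGroup p) : ∃ g, p • g = f := by
  have hp : ((p : ℤ)) ≠ 0 := by exact_mod_cast (Fact.out : p.Prime).pos.ne'
  choose g hg using fun i => divisible (f i) hp
  refine ⟨g, funext fun i => ?_⟩
  calc (p • g) i = p • g i := rfl
    _ = (p : ℤ) • g i := (natCast_zsmul _ _).symm
    _ = f i := hg i

/-- A `p`-divisible `p`-primary group with finite socle is a finite power of the
Prüfer group. -/
theorem structure_theorem (M : Type*) [AddCommGroup M]
    (htors : ∀ x : M, ∃ t : ℕ, p ^ t • x = 0)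
    (hdivp : ∀ x : M, ∃ y : M, p • y = x)
    (hsoc : Finite {x : M // p • x = 0}) :
    ∃ s : ℕ, Nonempty (M ≃+ (Fin s → PruferGroup p)) := by
  classical
  have hdiv : ∀ n : ℕ, 0 < n → ∀ x : M, ∃ y, n • y = x := by
    have h := nsmul_div_all p (Fact.out) (⊤ : AddSubgroup M) (fun x _ => htors x)
      (fun x _ => (hdivp x).imp fun y hy => ⟨trivial, hy⟩)
    intro n hn x
    obtain ⟨y, _, hy⟩ := h n hn x trivial
    exact ⟨y, hy⟩
  have hbaer := baer_of_divisible hdiv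
  set SM : AddSubgroup M := (DistribMulAction.toAddMonoidHom M (p : ℕ)).ker with hSM
  have mem_SM : ∀ x : M, x ∈ SM ↔ p • x = 0 := fun x => Iff.rfl
  haveI hfinSM : Finite ↥SM :=
    Finite.of_injective (fun x : ↥SM => (⟨x.1, x.2⟩ : {x : M // p • x = 0}))
      (fun a b hab => Subtype.ext (congrArg Subtype.val hab))
  have hsmul0 : ∀ x : ↥SM, p • x = 0 := by
    intro x
    apply Subtype.ext
    exact x.2
  haveI : Module (ZMod p) ↥SM := AddCommGroup.zmodModule hsmul0
  haveI : Module.Finite (ZMod p) ↥SM := Module.Finite.of_finite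
  set s := Module.finrank (ZMod p) ↥SM with hs
  let bb : Module.Basis (Fin s) (ZMod p) ↥SM := Module.finBasis (ZMod p) ↥SM
  -- socle of the Prüfer group
  set PS : AddSubgroup (PruferGroup p) :=
    (DistribMulAction.toAddMonoidHom (PruferGroup p) (p : ℕ)).ker with hPS
  have e : ZMod p ≃+ ↥PS := by
    refine AddEquiv.ofBijective
      ((fromZMod p).codRestrict PS (fun a => ?_)) ⟨?_, ?_⟩
    · exact fromZMod_torsion a
    · intro a b hab
      exact fromZMod_injective (congrArg Subtype.val hab)
    · rintro ⟨x, hx⟩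
      obtain ⟨a, ha⟩ := exists_fromZMod (hx : p • x = 0)
      exact ⟨a, Subtype.ext ha⟩
  -- socle of the power of the Prüfer group
  set W : AddSubgroup (Fin s → PruferGroup p) :=
    (DistribMulAction.toAddMonoidHom (Fin s → PruferGroup p) (p : ℕ)).ker with hW
  have memW : ∀ f : Fin s → PruferGroup p, f ∈ W ↔ p • f = 0 := fun f => Iff.rfl
  let ω : ↥W ≃+ (Fin s → ↥PS) :=
    { toFun := fun w => fun i => ⟨w.1 i, show p • w.1 i = 0 from congrFun w.2 i⟩
      invFun := fun v => ⟨fun i => (v i).1, funext fun i => (v i).2⟩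
      left_inv := fun w => Subtype.ext rfl
      right_inv := fun v => funext fun i => Subtype.ext rfl
      map_add' := fun w w' => funext fun i => Subtype.ext rfl }
  let g₁ : ↥W ≃+ ↥SM :=
    (ω.trans (AddEquiv.piCongrRight fun _ => e.symm)).trans
      bb.equivFun.toAddEquiv.symm
  obtain ⟨φ, hφ0⟩ := hbaer.extension_property_addMonoidHom W.subtype
    Subtype.coe_injective (SM.subtype.comp g₁.toAddMonoidHom)
  have hφ : ∀ w : ↥W, φ w.1 = (g₁ w : M) := fun w => DFunLike.congr_fun hφ0 w
  have hinj : Function.Injective φ := by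
    rw [injective_iff_map_eq_zero]
    intro x hx
    by_contra hx0
    obtain ⟨t, ht⟩ := pi_ppow_torsion x
    have hex : ∃ t : ℕ, p ^ t • x = 0 := ⟨t, ht⟩
    set t0 := Nat.find hex with ht0def
    have ht0 := Nat.find_spec hex
    have hpos : 0 < t0 := by
      rcases Nat.eq_zero_or_pos t0 with h | h
      · exfalso
        apply hx0
        have := ht0
        rw [← ht0def, h, pow_zero, one_smul] at this
        exact this
      · exact h
    set w := p ^ (t0 - 1) • x with hwdef
    have hw : p • w = 0 := by
      rw [hwdef, smul_smul, ← pow_succ', Nat.sub_add_cancel hpos]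
      exact ht0
    have hwne : w ≠ 0 := Nat.find_min hex (Nat.sub_lt hpos one_pos)
    have hφw : φ w = 0 := by rw [hwdef, map_nsmul, hx, smul_zero]
    have : ((g₁ ⟨w, hw⟩ : ↥SM) : M) = 0 := by rw [← hφ ⟨w, hw⟩]; exact hφw
    have : g₁ ⟨w, hw⟩ = 0 := Subtype.ext this
    have : (⟨w, hw⟩ : ↥W) = 0 := by
      apply g₁.injective
      rw [this, map_zero]
    exact hwne (congrArg Subtype.val this)
  have hsurj : Function.Surjective φ := by
    have key : ∀ t : ℕ, ∀ d : M, p ^ t • d = 0 → ∃ x, φ x = d := by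
      intro t
      induction t with
      | zero =>
        intro d hd
        rw [pow_zero, one_smul] at hd
        exact ⟨0, by rw [map_zero, hd]⟩
      | succ t ih =>
        intro d hd
        have hpd : p ^ t • (p • d) = 0 := by
          rw [smul_smul, ← pow_succ]
          exact hd
        obtain ⟨u, hu⟩ := ih (p • d) hpd
        obtain ⟨v, hv⟩ := pi_pdiv u
        have hsoc' : p • (d - φ v) = 0 := by
          rw [smul_sub, ← map_nsmul, hv, hu, sub_self]
        set sd : ↥SM := ⟨d - φ v, hsoc'⟩ with hsd
        set w := g₁.symm sd with hwdef
        refine ⟨w.1 + v, ?_⟩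
        rw [map_add, hφ w, hwdef, g₁.apply_symm_apply, hsd]
        show d - φ v + φ v = d
        abel
    intro d
    obtain ⟨t, ht⟩ := htors d
    exact key t d ht
  exact ⟨s, ⟨(AddEquiv.ofBijective φ ⟨hinj, hsurj⟩).symm⟩⟩

end Structure

section MainProof
variable {p : ℕ} [Fact p.Prime]
open PruferAux

theorem ppow_torsion_of_nsmul {x : PruferGroup p} {m : ℕ} (hm : 0 < m) (hx : m • x = 0) :
    p ^ m • x = 0 := by
  obtain ⟨n, hn⟩ := ppow_torsion x
  have hd1 : addOrderOf x ∣ m := addOrderOf_dvd_of_nsmul_eq_zero hx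
  have hd2 : addOrderOf x ∣ p ^ n := addOrderOf_dvd_of_nsmul_eq_zero hn
  obtain ⟨a, _, hda⟩ := (Nat.dvd_prime_pow (Fact.out : p.Prime)).mp hd2
  have hle : p ^ a ≤ m := Nat.le_of_dvd hm (hda ▸ hd1)
  have ham : a ≤ m := by
    by_contra h
    push_neg at h
    have h1 : m < p ^ m := Nat.lt_pow_self (n := m) (Fact.out : p.Prime).one_lt
    have h2 : p ^ m ≤ p ^ a := Nat.pow_le_pow_right (Fact.out : p.Prime).pos h.le
    omega
  exact addOrderOf_dvd_iff_nsmul_eq_zero.mp (hda ▸ pow_dvd_pow p ham)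

theorem finTor (r : ℕ) (F : Type*) [AddCommGroup F] [Finite F] (m : ℕ) (hm : 0 < m) :
    Finite {x : (Fin r → PruferGroup p) × F // m • x = 0} := by
  haveI : Finite {y : PruferGroup p // p ^ m • y = 0} := finite_torsion m
  refine Finite.of_injective
    (fun x : {x : (Fin r → PruferGroup p) × F // m • x = 0} =>
      ((fun i => (⟨x.1.1 i, ?_⟩ : {y : PruferGroup p // p ^ m • y = 0})), x.1.2)) ?_
  · have h1 : m • x.1.1 = 0 := congrArg Prod.fst x.2
    exact ppow_torsion_of_nsmul hm (congrFun h1 i)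
  · intro a b hab
    apply Subtype.ext
    have h1 := congrArg Prod.fst hab
    have h2 := congrArg Prod.snd hab
    refine Prod.ext (funext fun i => ?_) h2
    exact congrArg Subtype.val (congrFun h1 i)

end MainProof

theorem subgroup_of_finite_QpZp_type (p : ℕ) [Fact p.Prime]
    (r : ℕ) (F : Type*) [AddCommGroup F] [Finite F]
    (A : AddSubgroup ((Fin r → PruferGroup p) × F)) :
    ∃ (s : ℕ) (F' : Type) (_ : AddCommGroup F') (_ : Finite F'),
      Nonempty (A ≃+ ((Fin s → PruferGroup p) × F')) := by
  classical
  open PruferAux in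
  set G := (Fin r → PruferGroup p) × F with hG
  set N := Nat.card F with hN
  have hNpos : 0 < N := Nat.card_pos
  set μ : ℕ → (G →+ G) := fun m => DistribMulAction.toAddMonoidHom G m with hμ
  have μapp : ∀ m (x : G), μ m x = m • x := fun m x => rfl
  set Dk : ℕ → AddSubgroup G := fun k => AddSubgroup.map (μ (N * p ^ k)) A with hDk
  have hDle : ∀ k, Dk k ≤ A := by
    rintro k x ⟨a, ha, rfl⟩
    exact A.nsmul_mem ha _
  have hDsucc : ∀ k, AddSubgroup.map (μ p) (Dk k) = Dk (k + 1) := by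
    intro k
    rw [hDk, AddSubgroup.map_map]
    refine congrArg (fun h => AddSubgroup.map h A) (AddMonoidHom.ext fun x => ?_)
    show p • ((N * p ^ k) • x) = (N * p ^ (k + 1)) • x
    rw [smul_smul]
    congr 1
    ring
  have hDanti : ∀ k, Dk (k + 1) ≤ Dk k := by
    intro k
    rw [← hDsucc k]
    rintro x ⟨y, hy, rfl⟩
    exact (Dk k).nsmul_mem hy _
  have hmono : ∀ ⦃j k : ℕ⦄, j ≤ k → Dk k ≤ Dk j := antitone_nat_of_succ_le hDanti
  have htorsD : ∀ k, ∀ x ∈ Dk k, ∃ t : ℕ, p ^ t • x = 0 := by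
    rintro k x ⟨a, _, rfl⟩
    obtain ⟨t, ht⟩ := pi_ppow_torsion ((N * p ^ k) • a.1)
    refine ⟨t, Prod.ext ?_ ?_⟩
    · exact ht
    · show p ^ t • ((N * p ^ k) • a.2) = 0
      rw [mul_comm, mul_smul, show N • a.2 = 0 from card_nsmul_eq_zero', smul_zero, smul_zero]
  set S : ℕ → AddSubgroup G := fun k => Dk k ⊓ (μ p).ker with hS
  haveI hfinp : Finite {x : G // p • x = 0} :=
    finTor r F p (Fact.out : p.Prime).pos
  haveI hSfin : ∀ k, Finite ↥(S k) := by
    intro k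
    refine Finite.of_injective
      (fun x : ↥(S k) => (⟨x.1, x.2.2⟩ : {x : G // p • x = 0})) ?_
    intro a b hab
    apply Subtype.ext
    have h2 := congrArg (Subtype.val (p := fun x : G => p • x = 0)) hab
    exact h2
  have hS_le : ∀ ⦃j k : ℕ⦄, j ≤ k → S k ≤ S j := fun j k hjk =>
    inf_le_inf_right _ (hmono hjk)
  set f : ℕ → ℕ := fun k => Nat.card ↥(S k) with hf
  obtain ⟨k0, hk0⟩ : ∃ k0, f k0 = sInf (Set.range f) :=
    Nat.sInf_mem (Set.range_nonempty f)
  have hstabS : ∀ j, k0 ≤ j → S j = S k0 := by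
    intro j hj
    have hle := hS_le hj
    have hcard : (S k0 : Set G).ncard ≤ (S j : Set G).ncard := by
      rw [← Nat.card_coe_set_eq, ← Nat.card_coe_set_eq]
      calc Nat.card ↥(S k0) = sInf (Set.range f) := hk0
        _ ≤ Nat.card ↥(S j) := Nat.sInf_le ⟨j, rfl⟩
    exact SetLike.coe_injective
      (Set.eq_of_subset_of_ncard_le hle hcard (Set.toFinite _))
  have hstep : ∀ t : ℕ, ∀ x : G, p ^ t • x = 0 → ∀ j, k0 ≤ j → x ∈ Dk j → x ∈ Dk (j + 1) := by
    intro t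
    induction t with
    | zero =>
      intro x hx j _ _
      rw [pow_zero, one_smul] at hx
      rw [hx]
      exact zero_mem _
    | succ t ih =>
      intro x hx j hj hxj
      have hpx1 : p • x ∈ Dk (j + 1) := by
        rw [← hDsucc j]
        exact ⟨x, hxj, rfl⟩
      have hpxt : p ^ t • (p • x) = 0 := by
        rw [smul_smul, ← pow_succ]
        exact hx
      have hpx2 : p • x ∈ Dk (j + 2) := ih (p • x) hpxt (j + 1) (le_trans hj (by omega)) hpx1
      rw [← hDsucc (j + 1)] at hpx2
      obtain ⟨z, hz, hpz⟩ := hpx2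
      have hxz : x - z ∈ S j := by
        constructor
        · exact (Dk j).sub_mem hxj (hDanti j hz)
        · show p • (x - z) = 0
          have hpz' : p • z = p • x := hpz
          rw [smul_sub, hpz', sub_self]
      have hxz' : x - z ∈ Dk (j + 1) := by
        have h1 : x - z ∈ S (j + 1) := by
          rw [hstabS (j + 1) (by omega)]
          rw [← hstabS j hj]
          exact hxz
        exact h1.1
      have : x = z + (x - z) := by abel
      rw [this]
      exact (Dk (j + 1)).add_mem hz hxz'
  -- divisibility of D := Dk k0
  have hDk0div : ∀ x ∈ Dk k0, ∃ y ∈ Dk k0, p • y = x := by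
    intro x hx
    obtain ⟨t, ht⟩ := htorsD k0 x hx
    have hx1 : x ∈ Dk (k0 + 1) := hstep t x ht k0 le_rfl hx
    rw [← hDsucc k0] at hx1
    obtain ⟨y, hy, rfl⟩ := hx1
    exact ⟨y, hy, rfl⟩
  have hdivD : ∀ m : ℕ, 0 < m → ∀ x ∈ Dk k0, ∃ y ∈ Dk k0, m • y = x :=
    nsmul_div_all p (Fact.out) (Dk k0) (htorsD k0) hDk0div
  set DA : AddSubgroup ↥A := (Dk k0).comap A.subtype with hDA
  have memDA : ∀ x : ↥A, x ∈ DA ↔ (x : G) ∈ Dk k0 := fun x => Iff.rfl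
  have hdivDA : ∀ n : ℕ, 0 < n → ∀ x : ↥DA, ∃ y : ↥DA, n • y = x := by
    intro n hn x
    obtain ⟨y, hyD, hny⟩ := hdivD n hn _ x.2
    refine ⟨⟨⟨y, hDle k0 hyD⟩, hyD⟩, ?_⟩
    apply Subtype.ext
    apply Subtype.ext
    exact hny
  obtain ⟨ρ, hρ⟩ := exists_retraction DA hdivDA
  have eqA : ↥A ≃+ ↥DA × (↥A ⧸ DA) := splitEquiv DA ρ hρ
  -- the quotient is finite
  set m0 := N * p ^ k0 with hm0
  have hm0pos : 0 < m0 := Nat.mul_pos hNpos (pow_pos (Fact.out : p.Prime).pos k0)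
  haveI hfinm0 : Finite {x : G // m0 • x = 0} := finTor r F m0 hm0pos
  haveI hfinAm0 : Finite {x : ↥A // m0 • x = 0} := by
    refine Finite.of_injective
      (fun x : {x : ↥A // m0 • x = 0} =>
        (⟨(x.1 : G), congrArg Subtype.val x.2⟩ : {g : G // m0 • g = 0})) ?_
    intro a b hab
    apply Subtype.ext
    apply Subtype.ext
    have h2 := congrArg (Subtype.val (p := fun g : G => m0 • g = 0)) hab
    exact h2
  haveI hQfin : Finite (↥A ⧸ DA) := by
    refine Finite.of_surjective
      (fun x : {x : ↥A // m0 • x = 0} => QuotientAddGroup.mk' DA x.1) ?_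
    intro q
    obtain ⟨a, rfl⟩ := QuotientAddGroup.mk'_surjective DA q
    have hma : m0 • (a : G) ∈ Dk k0 := ⟨(a : G), a.2, rfl⟩
    obtain ⟨y, hyD, hym⟩ := hdivD m0 hm0pos _ hma
    set z : ↥A := ⟨y, hDle k0 hyD⟩ with hz
    have hzt : m0 • (a - z) = 0 := by
      apply Subtype.ext
      show m0 • ((a : G) - y) = 0
      rw [smul_sub, hym, sub_self]
    refine ⟨⟨a - z, hzt⟩, ?_⟩
    rw [QuotientAddGroup.mk'_eq_mk']
    refine ⟨z, hyD, ?_⟩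
    show (a - z) + z = a
    exact sub_add_cancel a z
  -- the divisible part is a power of the Prüfer group
  have htorsDA : ∀ x : ↥DA, ∃ t : ℕ, p ^ t • x = 0 := by
    intro x
    obtain ⟨t, ht⟩ := htorsD k0 _ x.2
    refine ⟨t, ?_⟩
    apply Subtype.ext
    apply Subtype.ext
    exact ht
  have hdivpDA : ∀ x : ↥DA, ∃ y, p • y = x := fun x =>
    hdivDA p (Fact.out : p.Prime).pos x
  haveI hsocDA : Finite {x : ↥DA // p • x = 0} := by
    refine Finite.of_injective
      (fun x : {x : ↥DA // p • x = 0} =>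
        (⟨((x.1 : ↥A) : G),
          congrArg (Subtype.val ∘ Subtype.val) x.2⟩ : {g : G // p • g = 0})) ?_
    intro a b hab
    apply Subtype.ext
    apply Subtype.ext
    apply Subtype.ext
    have h2 := congrArg (Subtype.val (p := fun g : G => p • g = 0)) hab
    exact h2
  obtain ⟨s, ⟨eD⟩⟩ := structure_theorem (↥DA) htorsDA hdivpDA hsocDA
  -- transport the finite quotient to `Type 0`
  obtain ⟨n, ⟨eFin⟩⟩ := Finite.exists_equiv_fin (↥A ⧸ DA)
  haveI : Small.{0} (↥A ⧸ DA) := small_of_injective (f := eFin) eFin.injective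
  haveI : Finite (Shrink.{0} (↥A ⧸ DA)) := Finite.of_equiv _ (equivShrink _)
  let eQ : Shrink.{0} (↥A ⧸ DA) ≃+ (↥A ⧸ DA) := Shrink.addEquiv
  exact ⟨s, Shrink.{0} (↥A ⧸ DA), inferInstance, inferInstance,
    ⟨eqA.trans (AddEquiv.prodCongr eD eQ.symm)⟩⟩
end

section
/- Every quotient of an abelian group of finite ℚ_p/ℤ_p-type is again of finite ℚ_p/ℤ_p-type. -/
/-- An abelian group is of finite `ℚ_p/ℤ_p`-type if it is isomorphic to
`(ℚ_p/ℤ_p)^r ⊕ F` for some `r : ℕ` and finite abelian group `F`. -/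
def IsFiniteQpZpType (p : ℕ) [Fact p.Prime] (A : Type*) [AddCommGroup A] : Prop :=
  ∃ (r : ℕ) (F : Type) (_ : AddCommGroup F) (_ : Finite F),
    Nonempty (A ≃+ ((Fin r → PruferGroup p) × F))

/-!
The image `N` of the divisible part `(ℚ_p/ℤ_p)^r` in a quotient `B` is divisible, hence an
injective `ℤ`-module and a direct summand of `B`, and `B ⧸ N` is a quotient of the finite part.
It remains to see that a quotient of `(ℚ_p/ℤ_p)^r` is some `(ℚ_p/ℤ_p)^s`. By the same splitting
this reduces, by induction on `r`, to `r = 1`: a proper subgroup of `ℚ_p/ℤ_p` is the kernel of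
multiplication by some `p^n`, which is surjective, so the proper quotients are `ℚ_p/ℤ_p` again.
-/

noncomputable instance AddMonoidHom.divisibleBy_range {X M : Type*} [AddCommGroup X]
    [AddCommGroup M] [DivisibleBy X ℤ] (f : X →+ M) : DivisibleBy f.range ℤ :=
  f.rangeRestrict_surjective.divisibleBy _ fun _ _ ↦ map_zsmul _ _ _

theorem AddSubgroup.nonempty_addEquiv_prod_quotient {M : Type*} [AddCommGroup M]
    (N : AddSubgroup M) [DivisibleBy N ℤ] : Nonempty (M ≃+ N × (M ⧸ N)) := by
  obtain ⟨r, hr⟩ := (Module.Baer.of_divisible N).injective.out N.toIntSubmodule.subtype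
    Subtype.val_injective LinearMap.id
  have hc := LinearMap.isCompl_of_proj (p := N.toIntSubmodule) (f := r) hr
  exact ⟨((Submodule.prodEquivOfIsCompl _ _ hc).symm.trans <|
    (LinearEquiv.refl ℤ N).prodCongr (Submodule.quotientEquivOfIsCompl _ _ hc).symm).toAddEquiv⟩

theorem exists_addEquiv_quotient_prod_quotient {X Y M : Type*} [AddCommGroup X] [AddCommGroup Y]
    [AddCommGroup M] [DivisibleBy X ℤ] (g : X × Y →+ M) (hg : Function.Surjective g) :
    ∃ (H : AddSubgroup X) (K : AddSubgroup Y), Nonempty (M ≃+ (X ⧸ H) × (Y ⧸ K)) := by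
  set f := g.comp (AddMonoidHom.inl X Y)
  obtain ⟨e⟩ := f.range.nonempty_addEquiv_prod_quotient
  let q := (QuotientAddGroup.mk' f.range).comp (g.comp (AddMonoidHom.inr X Y))
  have hq : Function.Surjective q := by
    intro z
    obtain ⟨m, rfl⟩ := QuotientAddGroup.mk'_surjective _ z
    obtain ⟨⟨x, y⟩, rfl⟩ := hg m
    refine ⟨y, QuotientAddGroup.eq_iff_sub_mem.2 ⟨-x, ?_⟩⟩
    simp [f, ← map_sub]
  exact ⟨f.ker, q.ker, ⟨e.trans (AddEquiv.prodCongr (QuotientAddGroup.quotientKerEquivRange f).symm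
    (QuotientAddGroup.quotientKerEquivOfSurjective q hq).symm)⟩⟩

theorem Padic.pow_succ_le_norm_of_pow_lt {p : ℕ} [Fact p.Prime] {x : ℚ_[p]} {m : ℕ}
    (h : (p : ℝ) ^ m < ‖x‖) : (p : ℝ) ^ (m + 1) ≤ ‖x‖ := by
  have := (Padic.norm_le_pow_iff_norm_lt_pow_add_one x m).not.1 (by simpa using h)
  exact_mod_cast not_lt.1 this

namespace PruferGroup

variable {p : ℕ} [Fact p.Prime]

noncomputable def mk : ℚ_[p] →+ PruferGroup p := QuotientAddGroup.mk' _

theorem mk_surjective : Function.Surjective (mk (p := p)) := QuotientAddGroup.mk'_surjective _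

theorem mk_eq_zero_iff {x : ℚ_[p]} : mk x = 0 ↔ ‖x‖ ≤ 1 :=
  (QuotientAddGroup.eq_zero_iff x).trans ⟨by rintro ⟨a, rfl⟩; exact a.2, fun h ↦ ⟨⟨x, h⟩, rfl⟩⟩

noncomputable instance : DivisibleBy (PruferGroup p) ℤ :=
  mk_surjective.divisibleBy mk fun _ _ ↦ map_zsmul _ _ _

/-- Approximate `y / x ∈ ℤ_[p]` by an integer `k` to within `‖x‖⁻¹`; then `y - k • x ∈ ℤ_[p]`. -/
theorem mk_mem_zmultiples_of_norm_le {x y : ℚ_[p]} (h : ‖y‖ ≤ ‖x‖) :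
    mk y ∈ AddSubgroup.zmultiples (mk x) := by
  rcases eq_or_ne x 0 with rfl | hx
  · rw [norm_zero, norm_le_zero_iff] at h
    simp [h]
  have hyx : ‖y / x‖ ≤ 1 := by
    rw [norm_div]; exact div_le_one_of_le₀ h (norm_nonneg x)
  let a : ℤ_[p] := ⟨y / x, hyx⟩
  obtain ⟨k, hk⟩ := Metric.denseRange_iff.1 PadicInt.denseRange_intCast a ‖x‖⁻¹
    (inv_pos.2 (norm_pos_iff.2 hx))
  rw [dist_eq_norm, PadicInt.norm_def, PadicInt.coe_sub, PadicInt.coe_intCast] at hk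
  refine AddSubgroup.mem_zmultiples_iff.2 ⟨k, ?_⟩
  rw [← map_zsmul, eq_comm, ← sub_eq_zero, ← map_sub, mk_eq_zero_iff, zsmul_eq_mul]
  calc ‖y - k * x‖ = ‖x‖ * ‖y / x - k‖ := by
        rw [← norm_mul, mul_sub, mul_div_cancel₀ _ hx, mul_comm]
    _ ≤ 1 := by
        have := mul_lt_mul_of_pos_left hk (norm_pos_iff.2 hx)
        rw [mul_inv_cancel₀ (norm_ne_zero_iff.2 hx)] at this
        exact this.le

theorem mk_mem_of_norm_le {H : AddSubgroup (PruferGroup p)} {x y : ℚ_[p]} (hx : mk x ∈ H)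
    (h : ‖y‖ ≤ ‖x‖) : mk y ∈ H :=
  AddSubgroup.zmultiples_le_of_mem hx (mk_mem_zmultiples_of_norm_le h)

theorem mk_mem_ker_zsmul_pow_iff {n : ℕ} {x : ℚ_[p]} :
    mk x ∈ (zsmulAddGroupHom ((p : ℤ) ^ n)).ker ↔ ‖x‖ ≤ (p : ℝ) ^ n := by
  have hp : (0 : ℝ) < (p : ℝ) ^ n := pow_pos (Nat.cast_pos.2 (Fact.out : p.Prime).pos) n
  rw [AddMonoidHom.mem_ker, zsmulAddGroupHom_apply, ← map_zsmul, mk_eq_zero_iff, zsmul_eq_mul,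
    norm_mul, Int.cast_pow, Int.cast_natCast, Padic.norm_p_pow, zpow_neg, zpow_natCast,
    inv_mul_le_iff₀ hp, mul_one]

/-- By `mk_mem_of_norm_le`, `H` is determined by how large the norms of its representatives get;
since these norms are powers of `p`, a bounded `H` is the kernel for the least bound `p ^ n`. -/
theorem eq_top_or_eq_ker_zsmul_pow (H : AddSubgroup (PruferGroup p)) :
    H = ⊤ ∨ ∃ n : ℕ, H = (zsmulAddGroupHom ((p : ℤ) ^ n)).ker := by
  by_cases hbdd : ∃ n : ℕ, ∀ x, mk x ∈ H → ‖x‖ ≤ (p : ℝ) ^ n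
  · classical
    refine Or.inr ⟨Nat.find hbdd, le_antisymm ?_ ?_⟩
    · intro z hz
      obtain ⟨x, rfl⟩ := mk_surjective z
      exact mk_mem_ker_zsmul_pow_iff.2 (Nat.find_spec hbdd x hz)
    · intro z hz
      obtain ⟨y, rfl⟩ := mk_surjective z
      have hy := mk_mem_ker_zsmul_pow_iff.1 hz
      rcases hN : Nat.find hbdd with _ | m
      · rw [hN, pow_zero, ← mk_eq_zero_iff] at hy
        exact hy ▸ H.zero_mem
      · obtain ⟨x, hx, hxm⟩ : ∃ x, mk x ∈ H ∧ (p : ℝ) ^ m < ‖x‖ := by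
          simpa using Nat.find_min hbdd (hN ▸ m.lt_succ_self)
        exact mk_mem_of_norm_le hx ((hN ▸ hy).trans (Padic.pow_succ_le_norm_of_pow_lt hxm))
  · push Not at hbdd
    refine Or.inl (eq_top_iff.2 fun z _ ↦ ?_)
    obtain ⟨y, rfl⟩ := mk_surjective z
    obtain ⟨n, hn⟩ := pow_unbounded_of_one_lt ‖y‖ (Nat.one_lt_cast.2 (Fact.out : p.Prime).one_lt)
    obtain ⟨x, hx, hxn⟩ := hbdd n
    exact mk_mem_of_norm_le hx (hn.trans hxn).le

theorem subsingleton_quotient_or_nonempty_addEquiv (H : AddSubgroup (PruferGroup p)) :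
    Subsingleton (PruferGroup p ⧸ H) ∨ Nonempty (PruferGroup p ⧸ H ≃+ PruferGroup p) := by
  obtain rfl | ⟨n, rfl⟩ := eq_top_or_eq_ker_zsmul_pow H
  · exact Or.inl QuotientAddGroup.subsingleton_quotient_top
  · refine Or.inr ⟨QuotientAddGroup.quotientKerEquivOfSurjective _ ?_⟩
    exact DivisibleBy.surjective_smul _ ℤ <|
      pow_ne_zero n (Int.natCast_ne_zero.2 (Fact.out : p.Prime).ne_zero)

theorem exists_quotient_pi_addEquiv_pi (r : ℕ) (H : AddSubgroup (Fin r → PruferGroup p)) :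
    ∃ s : ℕ, Nonempty ((Fin r → PruferGroup p) ⧸ H ≃+ (Fin s → PruferGroup p)) := by
  induction r with
  | zero =>
    have := (QuotientAddGroup.mk'_surjective H).subsingleton
    have : Unique ((Fin 0 → PruferGroup p) ⧸ H) := uniqueOfSubsingleton 0
    exact ⟨0, ⟨AddEquiv.ofUnique⟩⟩
  | succ r ih =>
    let cons := (Fin.consLinearEquiv ℤ fun _ : Fin (r + 1) ↦ PruferGroup p).toAddEquiv
    obtain ⟨H₁, K, ⟨e⟩⟩ := exists_addEquiv_quotient_prod_quotient
      ((QuotientAddGroup.mk' H).comp cons.toAddMonoidHom)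
      ((QuotientAddGroup.mk'_surjective H).comp cons.surjective)
    obtain ⟨s, ⟨eK⟩⟩ := ih K
    rcases subsingleton_quotient_or_nonempty_addEquiv H₁ with _ | ⟨⟨e₁⟩⟩
    · have : Unique (PruferGroup p ⧸ H₁) := uniqueOfSubsingleton 0
      exact ⟨s, ⟨e.trans (AddEquiv.uniqueProd.trans eK)⟩⟩
    · exact ⟨s + 1, ⟨e.trans ((e₁.prodCongr eK).trans
        (Fin.consLinearEquiv ℤ fun _ : Fin (s + 1) ↦ PruferGroup p).toAddEquiv)⟩⟩

end PruferGroup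

theorem quotient_of_finite_QpZp_type (p : ℕ) [Fact p.Prime]
    (A B : Type*) [AddCommGroup A] [AddCommGroup B]
    (hA : IsFiniteQpZpType p A) (f : A →+ B) (hf : Function.Surjective f) :
    IsFiniteQpZpType p B := by
  obtain ⟨r, F, _, _, ⟨eA⟩⟩ := hA
  obtain ⟨H, K, ⟨e⟩⟩ := exists_addEquiv_quotient_prod_quotient (f.comp eA.symm.toAddMonoidHom)
    (hf.comp eA.symm.surjective)
  obtain ⟨s, ⟨eH⟩⟩ := PruferGroup.exists_quotient_pi_addEquiv_pi r H
  exact ⟨s, F ⧸ K, inferInstance, inferInstance, ⟨e.trans (eH.prodCongr (AddEquiv.refl _))⟩⟩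
end

section
/- Let 0 → A' → A → A'' → 0 be a short exact sequence of condensed abelian groups (equivalently, sheaves of abelian groups on extremally disconnected profinite sets). Then A' and A'' are both discrete if and only if A is discrete, where a condensed abelian group T is discrete if for every extremally disconnected profinite set S = lim_i S_i (a cofiltered limit of finite sets) the natural map colim_i T(S_i) → T(S) is an isomorphism. -/
/-!
Let `L = D ∘ U` be "discretisation of the underlying module", where `U` evaluates at a point and
`D` is the locally constant (= discrete) sheaf functor, and let `ε : L ⟶ 𝟭` be the counit.
An object is discrete iff `ε` is an isomorphism on it.  `ε` is always a monomorphism: a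
locally constant section over `S` is determined by its restrictions to the points of `S`, where
`ε` is bijective.  `L` is exact: `D` is, and `U` preserves epimorphisms because the point is
extremally disconnected.  So `ε` is a monomorphism between two short exact sequences, and the
four and five lemmas show that it is an isomorphism in the middle iff it is one at both ends.
-/

universe u

open CategoryTheory Limits Opposite Condensed

namespace CategoryTheory.ShortComplex

variable {C : Type*} [Category* C] [Abelian C] {S₁ S₂ : ShortComplex C}

lemma isIso₁₃_iff_isIso₂_of_shortExact (φ : S₁ ⟶ S₂) (h₁ : S₁.ShortExact)
    (h₂ : S₂.ShortExact) [Mono φ.τ₃] : (IsIso φ.τ₁ ∧ IsIso φ.τ₃) ↔ IsIso φ.τ₂ := by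
  refine ⟨fun ⟨_, _⟩ ↦ isIso₂_of_shortExact_of_isIso₁₃ φ h₁ h₂, fun _ ↦ ?_⟩
  have := h₁.mono_f
  have := h₂.epi_g
  have : Mono φ.τ₁ := mono_of_mono_fac φ.comm₁₂
  have : Epi φ.τ₁ := Abelian.epi_of_mono_of_epi_of_mono (mapToComposableArrows φ)
    h₁.exact.exact_toComposableArrows h₂.exact.exact_toComposableArrows h₂.mono_f
    (inferInstanceAs (Epi φ.τ₂)) (inferInstanceAs (Mono φ.τ₃))
  have : Epi φ.τ₃ := epi_of_epi_fac φ.comm₂₃.symm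
  exact ⟨isIso_of_mono_of_epi _, isIso_of_mono_of_epi _⟩

end CategoryTheory.ShortComplex

namespace CondensedMod

variable {R : Type (u + 1)} [Ring R]

instance : (underlying (ModuleCat.{u + 1} R)).PreservesEpimorphisms where
  preserves f _ := by
    rw [ModuleCat.epi_iff_surjective]
    exact (epi_iff_surjective_on_stonean R f).mp ‹_› (Stonean.of PUnit.{u + 1})

noncomputable instance : PreservesFiniteLimits (underlying (ModuleCat.{u + 1} R)) :=
  have := (discreteUnderlyingAdj (ModuleCat.{u + 1} R)).rightAdjoint_preservesLimits
  inferInstance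

instance : (underlying (ModuleCat.{u + 1} R)).Additive where
  map_add := rfl

instance : (underlying (ModuleCat.{u + 1} R)).PreservesHomology :=
  Functor.preservesHomology_of_preservesEpis_and_kernels _

noncomputable instance : PreservesFiniteColimits (underlying (ModuleCat.{u + 1} R)) :=
  Functor.preservesFiniteColimits_of_preservesHomology _

noncomputable instance : PreservesFiniteLimits (discrete.{u} (ModuleCat.{u + 1} R)) :=
  comp_preservesFiniteLimits (Functor.const _) (presheafToSheaf _ _)

namespace LocallyConstant

noncomputable instance : PreservesFiniteLimits (functor.{u} R) :=
  preservesFiniteLimits_of_natIso (functorIsoDiscrete R).symm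

noncomputable instance : PreservesFiniteColimits (functor.{u} R) :=
  have := (adjunction R).leftAdjoint_preservesColimits
  inferInstance

lemma mono_of_injective_underlying_map {M : ModuleCat.{u + 1} R} {X : CondensedMod.{u} R}
    (φ : (functor R).obj M ⟶ X) (hφ : Function.Injective ((underlying _).map φ)) : Mono φ := by
  suffices ∀ S : CompHaus.{u}, Mono (φ.hom.app (op S)) by
    have := NatTrans.mono_of_mono_app φ.hom
    exact Sheaf.Hom.mono_of_presheaf_mono _ _ φ
  intro S
  rw [ModuleCat.mono_iff_injective]
  intro f g hfg
  refine LocallyConstant.ext fun s ↦ ?_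
  let p : CompHaus.of PUnit.{u + 1} ⟶ S := CompHausLike.ofHom _ ⟨fun _ ↦ s, continuous_const⟩
  have h := congr(X.obj.map p.op $hfg)
  rw [← ConcreteCategory.comp_apply, ← ConcreteCategory.comp_apply, ← φ.hom.naturality] at h
  exact LocallyConstant.congr_fun (hφ h) PUnit.unit

lemma mono_adjunction_counit_app (X : CondensedMod.{u} R) :
    Mono ((adjunction R).counit.app X) :=
  mono_of_injective_underlying_map _ <| (ModuleCat.mono_iff_injective _).mp <|
    IsIso.mono_of_iso ((underlying (ModuleCat.{u + 1} R)).map ((adjunction R).counit.app X))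

end LocallyConstant

lemma isDiscrete_iff_isIso_adjunction_counit_app (X : CondensedMod.{u} R) :
    IsDiscrete X ↔ IsIso ((LocallyConstant.adjunction R).counit.app X) :=
  ((isDiscrete_tfae R X).out 0 4 :)

end CondensedMod

theorem discrete_iff_discrete_of_shortExact
    (S : ShortComplex (CondensedAb.{u})) (hS : S.ShortExact) :
    (Condensed.IsDiscrete S.X₁ ∧ Condensed.IsDiscrete S.X₃) ↔ Condensed.IsDiscrete S.X₂ := by
  let ε := (CondensedMod.LocallyConstant.adjunction (ULift.{u + 1} ℤ)).counit
  have : Mono (S.mapNatTrans ε).τ₃ := CondensedMod.LocallyConstant.mono_adjunction_counit_app _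
  simp only [CondensedMod.isDiscrete_iff_isIso_adjunction_counit_app]
  exact ShortComplex.isIso₁₃_iff_isIso₂_of_shortExact (S.mapNatTrans ε) (hS.map_of_exact _) hS
end
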